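/- Let I be an equigenerated symmetric monomial ideal of K[x_1,...,x_n]. The rank of the matrix whose rows are the exponent vectors of the minimal monomial generators of I equals 1 if I is principal generated by (x_1⋯x_n)^a for some a, and equals n otherwise. -/

import Mathlib

open MvPolynomial

/-- The monomial `x^a` in `K[x_1,...,x_n]`. -/
noncomputable def mon (K : Type) [Field K] (n : ℕ) (a : Fin n → ℕ) :
    MvPolynomial (Fin n) K :=
  monomial (Finsupp.equivFunOnFinite.symm a) 1

/-- A monomial ideal: an ideal generated by monomials. -/
def IsMonomialIdeal (K : Type) [Field K] (n : ℕ)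
    (I : Ideal (MvPolynomial (Fin n) K)) : Prop :=
  ∃ S : Set (Fin n → ℕ), I = Ideal.span (mon K n '' S)

/-- A symmetric (`𝔖_n`-fixed) ideal. -/
def IsSymmetricIdeal (K : Type) [Field K] (n : ℕ)
    (I : Ideal (MvPolynomial (Fin n) K)) : Prop :=
  ∀ σ : Equiv.Perm (Fin n), Ideal.map (rename (σ : Fin n → Fin n)) I = I

/-- The exponent vector obtained from `a` by the Borel move `x^a ↦ x^a · x_i / x_j`. -/
def borelMoveVec (n : ℕ) (a : Fin n → ℕ) (i j : Fin n) : Fin n → ℕ :=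
  fun k => if k = i then a k + 1 else if k = j then a k - 1 else a k

/-- A symmetric strongly shifted ideal (sssi). -/
def IsSSSI (K : Type) [Field K] (n : ℕ)
    (I : Ideal (MvPolynomial (Fin n) K)) : Prop :=
  IsMonomialIdeal K n I ∧ IsSymmetricIdeal K n I ∧
    ∀ lam : Fin n → ℕ, Monotone lam → mon K n lam ∈ I →
      ∀ i j : Fin n, i < j → lam i < lam j →
        mon K n (borelMoveVec n lam i j) ∈ I

/-- The dominance order on partitions: `μ ⊴ λ`. -/
def dominates (n : ℕ) (μ lam : Fin n → ℕ) : Prop :=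
  ∀ k : Fin n, ∑ i ∈ Finset.Ici k, μ i ≤ ∑ i ∈ Finset.Ici k, lam i

/-- `a` is the exponent vector of a minimal monomial generator of the
monomial ideal `I`. -/
def IsMinGen (K : Type) [Field K] (n : ℕ) (I : Ideal (MvPolynomial (Fin n) K))
    (a : Fin n → ℕ) : Prop :=
  mon K n a ∈ I ∧ ∀ b : Fin n → ℕ, (∀ i, b i ≤ a i) → b ≠ a → mon K n b ∉ I

/-!
The minimal generators of a monomial ideal are the minimal exponent vectors of its monomials,
and symmetry makes them a union of `𝔖_n`-orbits. If they are all constant vectors,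
equigeneration leaves only one of them, so `I` is principal, generated by `(x_1⋯x_n)^a`.
Otherwise some generator `c` has `c i ≠ c j`; the differences `c ∘ σ - c ∘ (σ * swap k l)` are
nonzero multiples of `e_k - e_l`, so the permuted copies of `c` span the hyperplane of
sum-zero vectors, and together with `c` itself, whose coordinate sum is positive, all of `ℚⁿ`.
-/

lemma exists_eq_const_of_forall_eq {ι α : Type*} [Nonempty α] {f : ι → α}
    (hf : ∀ i j, f i = f j) : ∃ a, f = fun _ => a := by
  cases isEmpty_or_nonempty ι with
  | inl _ => exact ⟨Classical.arbitrary α, funext isEmptyElim⟩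
  | inr h => exact ⟨f h.some, funext fun j => hf j h.some⟩

lemma eq_of_forall_eq_of_sum_eq {ι : Type*} [Fintype ι] {f g : ι → ℕ}
    (hf : ∀ i j, f i = f j) (hg : ∀ i j, g i = g j) (hsum : ∑ i, f i = ∑ i, g i) : f = g := by
  funext i
  have hconst {h : ι → ℕ} (hh : ∀ i j, h i = h j) : ∑ j, h j = Fintype.card ι * h i := by
    simp [Finset.sum_congr rfl fun j _ => hh j i]
  rw [hconst hf, hconst hg] at hsum
  exact Nat.eq_of_mul_eq_mul_left (Fintype.card_pos_iff.2 ⟨i⟩) hsum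

section Monomial

variable {K : Type} [Field K] {n : ℕ}

lemma mon_zero : mon K n 0 = 1 := by
  rw [mon, show Finsupp.equivFunOnFinite.symm (0 : Fin n → ℕ) = 0 from Finsupp.ext fun _ => rfl,
    monomial_zero', C_1]

lemma mon_mem_span_mon_image {S : Set (Fin n → ℕ)} {b : Fin n → ℕ} :
    mon K n b ∈ Ideal.span (mon K n '' S) ↔ ∃ s ∈ S, s ≤ b := by
  classical
  have himage : mon K n '' S =
      (fun s => monomial s (1 : K)) '' (Finsupp.equivFunOnFinite.symm '' S) := by
    rw [Set.image_image]; rfl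
  rw [himage, mon, mem_ideal_span_monomial_image, support_monomial, if_neg one_ne_zero]
  simp only [Finset.mem_singleton, forall_eq, Set.exists_mem_image]
  rfl

lemma mon_mem_span_singleton {a b : Fin n → ℕ} :
    mon K n b ∈ Ideal.span {mon K n a} ↔ a ≤ b := by
  simpa using mon_mem_span_mon_image (K := K) (S := {a}) (b := b)

lemma rename_mon (σ : Equiv.Perm (Fin n)) (a : Fin n → ℕ) :
    rename ⇑σ (mon K n a) = mon K n (a ∘ σ.symm) := by
  rw [mon, rename_monomial, mon]
  congr 2
  ext j
  rw [← σ.apply_symm_apply j, Finsupp.mapDomain_apply σ.injective]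
  simp

variable {I : Ideal (MvPolynomial (Fin n) K)}

lemma isMinGen_iff_minimal {m : Fin n → ℕ} :
    IsMinGen K n I m ↔ Minimal (fun b => mon K n b ∈ I) m := by
  rw [minimal_iff]
  refine and_congr_right fun _ => forall_congr' fun b => ?_
  rw [eq_comm]
  tauto

lemma exists_isMinGen_le {a : Fin n → ℕ} (ha : mon K n a ∈ I) :
    ∃ m ≤ a, IsMinGen K n I m := by
  simp only [isMinGen_iff_minimal]
  exact exists_minimal_le_of_wellFoundedLT _ a ha

lemma isMinGen_span_mon_singleton_iff {a b : Fin n → ℕ} :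
    IsMinGen K n (Ideal.span {mon K n a}) b ↔ b = a := by
  simp only [isMinGen_iff_minimal, mon_mem_span_singleton, minimal_ge_iff]

lemma IsSymmetricIdeal.mon_comp_perm_mem (hsym : IsSymmetricIdeal K n I) {a : Fin n → ℕ}
    (ha : mon K n a ∈ I) (σ : Equiv.Perm (Fin n)) : mon K n (a ∘ σ) ∈ I := by
  have := Ideal.mem_map_of_mem (rename ⇑σ.symm) ha
  rwa [hsym, rename_mon, Equiv.symm_symm] at this

lemma IsMinGen.comp_perm (hsym : IsSymmetricIdeal K n I) {a : Fin n → ℕ}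
    (ha : IsMinGen K n I a) (σ : Equiv.Perm (Fin n)) : IsMinGen K n I (a ∘ σ) := by
  refine ⟨hsym.mon_comp_perm_mem ha.1 σ, fun b hle hne hb => ?_⟩
  refine ha.2 (b ∘ σ.symm) (fun i => by simpa using hle (σ.symm i)) ?_
    (hsym.mon_comp_perm_mem hb σ.symm)
  rintro rfl
  exact hne (by ext; simp)

lemma IsMonomialIdeal.eq_span_isMinGen (hmono : IsMonomialIdeal K n I) :
    I = Ideal.span (mon K n '' {a | IsMinGen K n I a}) := by
  obtain ⟨S, hS⟩ := hmono
  refine le_antisymm (hS.le.trans (Ideal.span_le.2 ?_)) (Ideal.span_le.2 ?_)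
  · rintro _ ⟨s, hs, rfl⟩
    have hsI : mon K n s ∈ I := hS ▸ Ideal.subset_span ⟨s, hs, rfl⟩
    obtain ⟨m, hms, hm⟩ := exists_isMinGen_le hsI
    exact mon_mem_span_mon_image.2 ⟨m, hm, hms⟩
  · rintro _ ⟨m, hm, rfl⟩
    exact hm.1

lemma IsMonomialIdeal.exists_isMinGen (hmono : IsMonomialIdeal K n I) (hbot : I ≠ ⊥) :
    ∃ m, IsMinGen K n I m := by
  by_contra! h
  apply hbot
  rw [hmono.eq_span_isMinGen]
  simp [h]

lemma IsMonomialIdeal.exists_eq_span_const (hmono : IsMonomialIdeal K n I)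
    (hequi : ∃ d : ℕ, ∀ a : Fin n → ℕ, IsMinGen K n I a → ∑ i, a i = d) (hbot : I ≠ ⊥)
    (hconst : ∀ c, IsMinGen K n I c → ∀ i j, c i = c j) :
    ∃ a : ℕ, I = Ideal.span {mon K n fun _ => a} := by
  obtain ⟨d, hd⟩ := hequi
  obtain ⟨m, hm⟩ := hmono.exists_isMinGen hbot
  have hgens : {a | IsMinGen K n I a} = {m} :=
    Set.eq_singleton_iff_unique_mem.2 ⟨hm, fun b hb =>
      eq_of_forall_eq_of_sum_eq (hconst b hb) (hconst m hm) ((hd b hb).trans (hd m hm).symm)⟩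
  obtain ⟨a, rfl⟩ := exists_eq_const_of_forall_eq (hconst m hm)
  exact ⟨a, hmono.eq_span_isMinGen.trans (by rw [hgens, Set.image_singleton])⟩

end Monomial

lemma Equiv.Perm.exists_apply_eq_and_apply_eq {ι : Type*} [DecidableEq ι] {k l i j : ι}
    (hkl : k ≠ l) (hij : i ≠ j) : ∃ σ : Equiv.Perm ι, σ k = i ∧ σ l = j := by
  refine ⟨(Equiv.swap k i).trans (Equiv.swap (Equiv.swap k i l) j), ?_, ?_⟩
  · have hi : i ≠ Equiv.swap k i l := by
      rw [Ne, eq_comm, Equiv.swap_apply_eq_iff, Equiv.swap_apply_right]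
      exact hkl.symm
    simp [Equiv.swap_apply_of_ne_of_ne hi hij]
  · simp

section PermutationSpan

variable {R ι : Type*} [Field R] [DecidableEq ι]

lemma single_sub_single_mem_span_comp_perm {v : ι → R} {i j : ι} (hij : v i ≠ v j) {k l : ι}
    (hkl : k ≠ l) :
    Pi.single k 1 - Pi.single l 1 ∈
      Submodule.span R (Set.range fun σ : Equiv.Perm ι => v ∘ σ) := by
  obtain ⟨σ, hσk, hσl⟩ :=
    Equiv.Perm.exists_apply_eq_and_apply_eq hkl (ne_of_apply_ne v hij)
  have hdiff : v ∘ σ - v ∘ ⇑(σ * Equiv.swap k l) =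
      (v i - v j) • (Pi.single k 1 - Pi.single l 1) := by
    ext p
    simp only [Pi.sub_apply, Function.comp_apply, Equiv.Perm.mul_apply, Pi.smul_apply,
      Pi.single_apply, Equiv.swap_apply_def, smul_eq_mul]
    split_ifs <;> simp_all
  rw [← Submodule.smul_mem_iff _ (sub_ne_zero.2 hij), ← hdiff]
  exact Submodule.sub_mem _ (Submodule.subset_span ⟨σ, rfl⟩)
    (Submodule.subset_span ⟨σ * Equiv.swap k l, rfl⟩)

lemma span_range_comp_perm_eq_top [Fintype ι] {v : ι → R} (hsum : ∑ i, v i ≠ 0)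
    (hv : ∃ i j, v i ≠ v j) :
    Submodule.span R (Set.range fun σ : Equiv.Perm ι => v ∘ σ) = ⊤ := by
  obtain ⟨i, j, hij⟩ := hv
  set W := Submodule.span R (Set.range fun σ : Equiv.Perm ι => v ∘ σ)
  have hsingle (k : ι) : Pi.single k 1 ∈ W := by
    have hvW : v ∈ W := Submodule.subset_span ⟨1, rfl⟩
    have key : (∑ p, v p) • Pi.single k (1 : R) =
        v - ∑ p, v p • (Pi.single p 1 - Pi.single k 1) := by
      simp only [smul_sub, Finset.sum_sub_distrib, ← Finset.sum_smul]
      simp only [← Pi.single_smul, smul_eq_mul, mul_one, Finset.univ_sum_single, sub_sub_cancel]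
    rw [← Submodule.smul_mem_iff W hsum, key]
    refine W.sub_mem hvW (W.sum_mem fun p _ => W.smul_mem _ ?_)
    obtain rfl | hpk := eq_or_ne p k
    · simp
    · exact single_sub_single_mem_span_comp_perm hij hpk
  rw [eq_top_iff, ← (Pi.basisFun R ι).span_eq, Submodule.span_le]
  rintro _ ⟨k, rfl⟩
  rw [Pi.basisFun_apply]
  exact hsingle k

end PermutationSpan

/-- For a nonzero proper equigenerated symmetric monomial ideal `I`, the rank
over `ℚ` of the matrix whose rows are the exponent vectors of the minimal
monomial generators of `I` is `1` when `I` is principal generated by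
`(x_1⋯x_n)^a` for some `a`, and `n` otherwise. -/
theorem rank_exponent_matrix (K : Type) [Field K] (n : ℕ)
    (I : Ideal (MvPolynomial (Fin n) K))
    (hmono : IsMonomialIdeal K n I) (hsym : IsSymmetricIdeal K n I)
    (hequi : ∃ d : ℕ, ∀ a : Fin n → ℕ, IsMinGen K n I a → ∑ i, a i = d)
    (hbot : I ≠ ⊥) (htop : I ≠ ⊤) :
    ((∃ a : ℕ, I = Ideal.span {mon K n (fun _ => a)}) →
      Module.finrank ℚ
        (Submodule.span ℚ {v : Fin n → ℚ |
          ∃ a : Fin n → ℕ, IsMinGen K n I a ∧ v = fun i => (a i : ℚ)}) = 1) ∧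
    ((¬ ∃ a : ℕ, I = Ideal.span {mon K n (fun _ => a)}) →
      Module.finrank ℚ
        (Submodule.span ℚ {v : Fin n → ℚ |
          ∃ a : Fin n → ℕ, IsMinGen K n I a ∧ v = fun i => (a i : ℚ)}) = n) := by
  constructor
  · rintro ⟨a, rfl⟩
    have hgens : {v : Fin n → ℚ | ∃ b, IsMinGen K n (Ideal.span {mon K n fun _ => a}) b ∧
        v = fun i => (b i : ℚ)} = {fun _ => (a : ℚ)} := by
      ext v
      simp [isMinGen_span_mon_singleton_iff]
    rw [hgens, finrank_span_singleton]
    intro hzero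
    have ha : (fun _ => a : Fin n → ℕ) = 0 :=
      funext fun i => Nat.cast_eq_zero.1 (congrFun hzero i)
    exact htop (by rw [ha, mon_zero, Ideal.span_singleton_one])
  · intro hnp
    obtain ⟨c, hc, i, j, hij⟩ : ∃ c, IsMinGen K n I c ∧ ∃ i j, c i ≠ c j := by
      by_contra! hconst
      exact hnp (hmono.exists_eq_span_const hequi hbot hconst)
    have hsum : ∑ k, (c k : ℚ) ≠ 0 := by
      rw [← Nat.cast_sum, Nat.cast_ne_zero, Ne, Finset.sum_eq_zero_iff]
      exact fun h => hij (by rw [h i (Finset.mem_univ i), h j (Finset.mem_univ j)])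
    have hperm := span_range_comp_perm_eq_top hsum ⟨i, j, by exact_mod_cast hij⟩
    rw [eq_top_iff.2 (hperm.ge.trans (Submodule.span_mono ?_)), finrank_top,
      Module.finrank_fin_fun]
    rintro _ ⟨σ, rfl⟩
    exact ⟨c ∘ σ, hc.comp_perm hsym σ, rfl⟩
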